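/- arXiv:0905.1248 — 4 statements merged into one kernel-verified Lean document; each statement's English description precedes it below -/
import Mathlib

section
/- For a unary dpda in normal form with n states and m stack symbols, the sequence (m_t)_{t≥0} of modes reached at each computation step is ultimately periodic with preperiod μ and period λ satisfying μ + λ ≤ 2^{nm}. -/
/-- A move of a unary pushdown automaton in normal form: read `a` (stack
unchanged), read nothing / ε state change (stack unchanged), pop the top
symbol, or push one symbol. -/
inductive PMove (Q Γ : Type*) where
  | readA (p : Q)
  | readE (p : Q)
  | pop (p : Q)
  | push (p : Q) (B : Γ)

/-- A unary pushdown automaton in normal form over the one-letter alphabet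
`{a}`, accepting by final states. Nondeterminism is allowed (`δ` is
set-valued); determinism is the predicate `UPDA.Deterministic`. -/
structure UPDA (Q Γ : Type*) where
  start : Q
  Z0 : Γ
  final : Set Q
  δ : Q → Γ → Set (PMove Q Γ)

namespace UPDA

variable {Q Γ : Type*}

/-- Configurations are `(state, number of input symbols consumed so far, stack)`
with the stack top leftmost. One computation step. -/
inductive Step (M : UPDA Q Γ) : Q × ℕ × List Γ → Q × ℕ × List Γ → Prop
  | readA {q n A γ p} : PMove.readA p ∈ M.δ q A →
      Step M (q, n, A :: γ) (p, n + 1, A :: γ)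
  | readE {q n A γ p} : PMove.readE p ∈ M.δ q A →
      Step M (q, n, A :: γ) (p, n, A :: γ)
  | pop {q n A γ p} : PMove.pop p ∈ M.δ q A →
      Step M (q, n, A :: γ) (p, n, γ)
  | push {q n A γ p B} : PMove.push p B ∈ M.δ q A →
      Step M (q, n, A :: γ) (p, n, B :: A :: γ)

/-- Reachability in zero or more steps; `M.Reaches (q, 0, γ) (p, k, γ')` means
`(q, a^k, γ) ⊢* (p, ε, γ')` in the notation of the paper. -/
def Reaches (M : UPDA Q Γ) : Q × ℕ × List Γ → Q × ℕ × List Γ → Prop :=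
  Relation.ReflTransGen M.Step

/-- Determinism: at most one move from each mode (for a unary alphabet this is
equivalent to the usual two dpda conditions). -/
def Deterministic (M : UPDA Q Γ) : Prop :=
  ∀ q A m₁ m₂, m₁ ∈ M.δ q A → m₂ ∈ M.δ q A → m₁ = m₂

/-- Remaining normal form conditions: `Z0` is never pushed nor popped. -/
def NormalForm (M : UPDA Q Γ) : Prop :=
  (∀ q A p, PMove.push p M.Z0 ∉ M.δ q A) ∧ (∀ q p, PMove.pop p ∉ M.δ q M.Z0)

/-- Acceptance by final states: `a^n` is accepted iff some configuration with
all `n` symbols consumed and a final state is reachable. -/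
def Accepts (M : UPDA Q Γ) (n : ℕ) : Prop :=
  ∃ p γ, M.Reaches (M.start, 0, [M.Z0]) (p, n, γ) ∧ p ∈ M.final

/-- The order `≤` on modes `[qA]` of the paper. -/
def ModeLE (M : UPDA Q Γ) (x y : Q × Γ) : Prop :=
  ∃ (k h : ℕ) (α β : List Γ),
    M.Reaches (M.start, 0, [M.Z0]) (x.1, k, x.2 :: α) ∧
    M.Reaches (x.1, 0, [x.2]) (y.1, h, y.2 :: β) ∧
    ∀ (k' : ℕ) (β' : List Γ), k' < k →
      M.Reaches (M.start, 0, [M.Z0]) (y.1, k', y.2 :: β') →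
      ∃ (k'' : ℕ) (p' : Q), k' + k'' < k ∧
        M.Reaches (y.1, 0, [y.2]) (p', k'', ([] : List Γ))

/-- `c` is the (unique, by determinism) computation of `M` from the initial
configuration, followed for at least `t` steps. -/
def TraceUpTo (M : UPDA Q Γ) (c : ℕ → Q × ℕ × List Γ) (t : ℕ) : Prop :=
  c 0 = (M.start, 0, [M.Z0]) ∧ ∀ j < t, M.Step (c j) (c (j + 1))

end UPDA

/-- `ms` is the history at time `t` of the computation `c`, written
bottom-first: `ms[i]` is the mode (state, top stack symbol) of the last
configuration up to time `t` whose stack height is `i + 1`, and the length of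
`ms` is the current stack height. -/
def HistoryAt {Q Γ : Type*} (c : ℕ → Q × ℕ × List Γ) (t : ℕ)
    (ms : List (Q × Γ)) : Prop :=
  ms.length = (c t).2.2.length ∧
  ∀ i (hi : i < ms.length), ∃ j, j ≤ t ∧ (c j).2.2.length = i + 1 ∧
    (∀ j', j < j' → j' ≤ t → (c j').2.2.length ≠ i + 1) ∧
    (c j).1 = (ms.get ⟨i, hi⟩).1 ∧ (c j).2.2.head? = some (ms.get ⟨i, hi⟩).2

/-!
A loop is a pair of times `u < v` with the same mode such that the stack never drops below
its height at `u` in between. By determinism the run from `v` then replays the run from `u`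
on top of the same top symbol, so the modes are periodic from `u` on with period `v - u`.
A loop occurs within the first `2^{nm}` steps: the sets of modes in the histories at times
`0, …, 2^{nm} - 1` are nonempty subsets of `Q × Γ`, so two of them coincide, and equal
history sets at two times force a loop between them. A run that stops earlier makes the
statement vacuous.
-/

def PMove.apply {Q Γ : Type*} (mv : PMove Q Γ) (k : ℕ) (A : Γ) (γ : List Γ) :
    Q × ℕ × List Γ :=
  match mv with
  | .readA p => (p, k + 1, A :: γ)
  | .readE p => (p, k, A :: γ)
  | .pop p => (p, k, γ)
  | .push p B => (p, k, B :: A :: γ)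

namespace UPDA

variable {Q Γ : Type*} {M : UPDA Q Γ}

theorem step_cons_iff {q : Q} {k : ℕ} {A : Γ} {γ : List Γ} {y : Q × ℕ × List Γ} :
    M.Step (q, k, A :: γ) y ↔ ∃ mv ∈ M.δ q A, y = mv.apply k A γ := by
  constructor
  · rintro (⟨h⟩ | ⟨h⟩ | ⟨h⟩ | ⟨h⟩) <;> exact ⟨_, h, rfl⟩
  · rintro ⟨(_ | _ | _ | _), h, rfl⟩
    exacts [.readA h, .readE h, .pop h, .push h]

theorem Step.stack_ne_nil {x y : Q × ℕ × List Γ} (h : M.Step x y) : x.2.2 ≠ [] := by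
  cases h <;> simp

theorem Step.length_stack_le {x y : Q × ℕ × List Γ} (h : M.Step x y) :
    y.2.2.length ≤ x.2.2.length + 1 := by
  cases h <;> simp only [List.length_cons] <;> omega

theorem Step.functional (hdet : M.Deterministic) {x y z : Q × ℕ × List Γ}
    (h₁ : M.Step x y) (h₂ : M.Step x z) : y = z := by
  obtain ⟨q, k, _ | ⟨A, γ⟩⟩ := x
  · cases h₁
  rw [step_cons_iff] at h₁ h₂
  obtain ⟨mv₁, hm₁, rfl⟩ := h₁
  obtain ⟨mv₂, hm₂, rfl⟩ := h₂
  rw [hdet q A mv₁ mv₂ hm₁ hm₂]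

theorem Step.append_stack (hdet : M.Deterministic) {x x' y y' : Q × ℕ × List Γ}
    {γ ρ ρ' : List Γ} (hγ : γ ≠ []) (hq : x.1 = y.1) (hx : x.2.2 = γ ++ ρ)
    (hy : y.2.2 = γ ++ ρ') (h₁ : M.Step x x') (h₂ : M.Step y y') :
    x'.1 = y'.1 ∧ ∃ γ', x'.2.2 = γ' ++ ρ ∧ y'.2.2 = γ' ++ ρ' := by
  obtain ⟨A, γ, rfl⟩ := List.exists_cons_of_ne_nil hγ
  obtain ⟨q, k, _⟩ := x
  obtain ⟨q', l, _⟩ := y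
  dsimp only at hq hx hy
  subst hq hx hy
  rw [List.cons_append, step_cons_iff] at h₁ h₂
  obtain ⟨mv, hm₁, rfl⟩ := h₁
  obtain ⟨mv', hm₂, rfl⟩ := h₂
  obtain rfl := hdet q A mv mv' hm₁ hm₂
  cases mv
  exacts [⟨rfl, A :: γ, rfl, rfl⟩, ⟨rfl, A :: γ, rfl, rfl⟩, ⟨rfl, γ, rfl, rfl⟩,
    ⟨rfl, _ :: A :: γ, rfl, rfl⟩]

variable {c c' : ℕ → Q × ℕ × List Γ} {N : ℕ}

theorem TraceUpTo.eq_of_le (hdet : M.Deterministic) {N' : ℕ} (hc : M.TraceUpTo c N)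
    (hc' : M.TraceUpTo c' N') {j : ℕ} (hj : j ≤ N) (hj' : j ≤ N') : c j = c' j := by
  induction j with
  | zero => rw [hc.1, hc'.1]
  | succ j ih =>
    have h₁ := hc.2 j (by omega)
    rw [ih (by omega) (by omega)] at h₁
    exact h₁.functional hdet (hc'.2 j (by omega))

def stackHeight (c : ℕ → Q × ℕ × List Γ) (j : ℕ) : ℕ := (c j).2.2.length

/-- The default `M.Z0` is only reached for an empty stack, which can occur only at the last
time of a run. -/
def mode (M : UPDA Q Γ) (c : ℕ → Q × ℕ × List Γ) (j : ℕ) : Q × Γ :=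
  ((c j).1, (c j).2.2.headD M.Z0)

def IsLoop (M : UPDA Q Γ) (c : ℕ → Q × ℕ × List Γ) (u v : ℕ) : Prop :=
  u < v ∧ M.mode c u = M.mode c v ∧ ∀ w, u ≤ w → w ≤ v → stackHeight c u ≤ stackHeight c w

theorem IsLoop.congr {u v : ℕ} (hloop : M.IsLoop c u v) (h : ∀ j ≤ v, c j = c' j) :
    M.IsLoop c' u v := by
  obtain ⟨huv, hmode, hheight⟩ := hloop
  refine ⟨huv, ?_, fun w hw₁ hw₂ => ?_⟩
  · simpa only [mode, h u huv.le, h v le_rfl] using hmode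
  · simpa only [stackHeight, h u huv.le, h w hw₂] using hheight w hw₁ hw₂

/-- Determinism makes the run from `v` replay the run from `u` on top of a different stack
bottom, as long as the replayed run stays above that bottom; comparing with the copy shifted
by `v - u` shows that it always does. -/
theorem IsLoop.replay (hdet : M.Deterministic) (hc : ∀ j < N, M.Step (c j) (c (j + 1)))
    {u v : ℕ} (hloop : M.IsLoop c u v) {A : Γ} {ρ ρ' : List Γ} (hu : (c u).2.2 = A :: ρ)
    (hv : (c v).2.2 = A :: ρ') (s : ℕ) (hs : v + s ≤ N) :
    (c (u + s)).1 = (c (v + s)).1 ∧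
      ∃ γ ≠ [], (c (u + s)).2.2 = γ ++ ρ ∧ (c (v + s)).2.2 = γ ++ ρ' := by
  obtain ⟨huv, hmode, hheight⟩ := hloop
  induction s using Nat.strong_induction_on with
  | _ s ih =>
  rcases s with _ | s
  · exact ⟨(congrArg Prod.fst hmode :), [A], List.cons_ne_nil _ _, hu, hv⟩
  obtain ⟨hq, γ, hγ, hγu, hγv⟩ := ih s (by omega) (by omega)
  obtain ⟨hq', γ', hγu', hγv'⟩ :=
    (hc (u + s) (by omega)).append_stack hdet hγ hq hγu hγv (hc (v + s) (by omega))
  have hlow : stackHeight c u ≤ stackHeight c (u + s + 1) := by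
    rcases le_or_gt (u + s + 1) v with hle | hgt
    · exact hheight _ (by omega) hle
    · obtain ⟨-, γ₀, hγ₀, -, hγ₀v⟩ := ih (u + (s + 1) - v) (by omega) (by omega)
      have hv_le := hheight v huv.le le_rfl
      rw [show v + (u + (s + 1) - v) = u + s + 1 by omega] at hγ₀v
      simp only [stackHeight, hv, hγ₀v, List.length_cons, List.length_append] at hv_le ⊢
      have := List.length_pos_of_ne_nil hγ₀
      omega
  refine ⟨hq', γ', fun hnil => ?_, hγu', hγv'⟩
  rw [stackHeight, stackHeight, hu, hγu', hnil, List.nil_append, List.length_cons] at hlow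
  omega

theorem IsLoop.mode_add_eq (hdet : M.Deterministic) (hc : ∀ j < N, M.Step (c j) (c (j + 1)))
    {u v : ℕ} (hloop : M.IsLoop c u v) {s : ℕ} (hs : v + s ≤ N) :
    (c (u + s)).1 = (c (v + s)).1 ∧ (c (u + s)).2.2.head? = (c (v + s)).2.2.head? := by
  have huv := hloop.1
  obtain ⟨A, ρ, hu⟩ := List.exists_cons_of_ne_nil (hc u (by omega)).stack_ne_nil
  obtain ⟨A', ρ', hv⟩ : ∃ A' ρ', (c v).2.2 = A' :: ρ' := by
    have := hloop.2.2 v huv.le le_rfl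
    rw [stackHeight, stackHeight, hu] at this
    simp only [List.length_cons] at this
    exact List.exists_cons_of_length_pos (by omega)
  obtain rfl : A' = A := by
    simpa only [mode, hu, hv, List.headD_cons] using (congrArg Prod.snd hloop.2.1).symm
  obtain ⟨hq, γ, hγ, hγu, hγv⟩ := hloop.replay hdet hc hu hv s hs
  rw [hγu, hγv, List.head?_append_of_ne_nil _ hγ, List.head?_append_of_ne_nil _ hγ]
  exact ⟨hq, rfl⟩

/-- The times whose modes make up the history at time `t` in the sense of `HistoryAt`. -/
def IsHistoryTime (c : ℕ → Q × ℕ × List Γ) (t u : ℕ) : Prop :=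
  u ≤ t ∧ ∀ w, u < w → w ≤ t → stackHeight c u < stackHeight c w

theorem IsHistoryTime.stackHeight_le {t u w : ℕ} (h : IsHistoryTime c t u) (huw : u ≤ w)
    (hwt : w ≤ t) : stackHeight c u ≤ stackHeight c w := by
  rcases huw.eq_or_lt with rfl | hlt
  · exact le_rfl
  · exact (h.2 w hlt hwt).le

open Classical in
noncomputable def historyModes (M : UPDA Q Γ) (c : ℕ → Q × ℕ × List Γ) (t : ℕ) :
    Finset (Q × Γ) :=
  ((Finset.range (t + 1)).filter (IsHistoryTime c t)).image (M.mode c)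

theorem mem_historyModes {t : ℕ} {x : Q × Γ} :
    x ∈ M.historyModes c t ↔ ∃ u, IsHistoryTime c t u ∧ M.mode c u = x := by
  simp only [historyModes, Finset.mem_image, Finset.mem_filter, Finset.mem_range]
  exact ⟨fun ⟨u, ⟨_, hu⟩, hx⟩ => ⟨u, hu, hx⟩,
    fun ⟨u, hu, hx⟩ => ⟨u, ⟨Nat.lt_succ_of_le hu.1, hu⟩, hx⟩⟩

theorem exists_historyModes_eq [Fintype Q] [Fintype Γ] (M : UPDA Q Γ)
    (c : ℕ → Q × ℕ × List Γ) {T : ℕ} (hT : 2 ^ Fintype.card (Q × Γ) ≤ T) :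
    ∃ t₁ t₂, t₁ < t₂ ∧ t₂ < T ∧ M.historyModes c t₁ = M.historyModes c t₂ := by
  classical
  have hcard : (Finset.univ.powerset.erase ∅ : Finset (Finset (Q × Γ))).card <
      (Finset.range T).card := by
    rw [Finset.card_erase_of_mem (Finset.empty_mem_powerset _), Finset.card_powerset,
      Finset.card_univ, Finset.card_range]
    have := Nat.one_le_two_pow (n := Fintype.card (Q × Γ))
    omega
  have hmaps : ∀ t ∈ Finset.range T, M.historyModes c t ∈ Finset.univ.powerset.erase ∅ := by
    intro t _
    refine Finset.mem_erase.mpr ⟨Finset.ne_empty_of_mem (a := M.mode c t) ?_, by simp⟩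
    exact mem_historyModes.mpr ⟨t, ⟨le_rfl, fun w hw hwt => absurd hwt (by omega)⟩, rfl⟩
  obtain ⟨t₁, ht₁, t₂, ht₂, hne, heq⟩ :=
    Finset.exists_ne_map_eq_of_card_lt_of_maps_to hcard hmaps
  rw [Finset.mem_range] at ht₁ ht₂
  rcases hne.lt_or_gt with hlt | hlt
  · exact ⟨t₁, t₂, hlt, ht₂, heq⟩
  · exact ⟨t₂, t₁, hlt, ht₁, heq.symm⟩

theorem exists_last_stackHeight_le {s t d : ℕ} (hst : s ≤ t) (hs : stackHeight c s ≤ d) :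
    ∃ u, s ≤ u ∧ u ≤ t ∧ stackHeight c u ≤ d ∧ ∀ w, u < w → w ≤ t → d < stackHeight c w := by
  induction t, hst using Nat.le_induction with
  | base => exact ⟨s, le_rfl, le_rfl, hs, fun w hw hws => absurd hws (by omega)⟩
  | succ t hst ih =>
    by_cases ht : stackHeight c (t + 1) ≤ d
    · exact ⟨t + 1, by omega, le_rfl, ht, fun w hw hwt => absurd hwt (by omega)⟩
    obtain ⟨u, hsu, hut, hu, hafter⟩ := ih
    refine ⟨u, hsu, by omega, hu, fun w hw hwt => ?_⟩
    rcases hwt.lt_or_eq with hwt | rfl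
    · exact hafter w hw (by omega)
    · omega

theorem exists_isHistoryTime_forall_stackHeight_le {t₁ t₂ : ℕ} (h : t₁ < t₂) :
    ∃ w, t₁ < w ∧ IsHistoryTime c t₂ w ∧
      ∀ w', t₁ < w' → w' ≤ t₂ → stackHeight c w ≤ stackHeight c w' := by
  obtain ⟨s, hs, hmin⟩ :=
    (Finset.Ioc t₁ t₂).exists_min_image (stackHeight c) ⟨t₂, Finset.mem_Ioc.mpr ⟨h, le_rfl⟩⟩
  rw [Finset.mem_Ioc] at hs
  obtain ⟨w, hsw, hwt, hw, hafter⟩ := exists_last_stackHeight_le (c := c) hs.2 le_rfl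
  have hmin' : ∀ w', t₁ < w' → w' ≤ t₂ → stackHeight c s ≤ stackHeight c w' :=
    fun w' h₁ h₂ => hmin w' (Finset.mem_Ioc.mpr ⟨h₁, h₂⟩)
  have hws : stackHeight c w = stackHeight c s := le_antisymm hw (hmin' w (by omega) hwt)
  exact ⟨w, by omega, ⟨hwt, fun w' h₁ h₂ => hws ▸ hafter w' h₁ h₂⟩, hws ▸ hmin'⟩

theorem exists_isHistoryTime_stackHeight_eq {t d : ℕ}
    (hc : ∀ j < t, stackHeight c (j + 1) ≤ stackHeight c j + 1) (h₀ : stackHeight c 0 ≤ d)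
    (hd : d < stackHeight c t) : ∃ u, IsHistoryTime c t u ∧ stackHeight c u = d := by
  obtain ⟨u, -, hut, hu, hafter⟩ := exists_last_stackHeight_le (Nat.zero_le t) h₀
  have hut' : u < t := lt_of_le_of_ne hut (by rintro rfl; omega)
  have hud : d ≤ stackHeight c u := by
    have := hafter (u + 1) (by omega) hut'
    have := hc u hut'
    omega
  exact ⟨u, ⟨hut, fun w h₁ h₂ => by have := hafter w h₁ h₂; omega⟩, by omega⟩

/-- Suppose no loop ends by `t₂`. Let `w₀` be a lowest point in `(t₁, t₂]`. The mode of `w₀`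
occurs in the history at `t₁`, necessarily higher up, so that history has a time `u₀` at the
height of `w₀`. The mode of `u₀` occurs in the history at `t₂`, and wherever it does it closes
a loop. -/
theorem exists_isLoop_of_historyModes_eq {T t₁ t₂ : ℕ} (hc : M.TraceUpTo c T) (h₁₂ : t₁ < t₂)
    (h₂T : t₂ < T) (heq : M.historyModes c t₁ = M.historyModes c t₂) :
    ∃ u v, M.IsLoop c u v ∧ v ≤ t₂ := by
  by_contra! hno
  obtain ⟨w₀, hw₀, hw₀hist, hw₀min⟩ := exists_isHistoryTime_forall_stackHeight_le (c := c) h₁₂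
  set d := stackHeight c w₀
  obtain ⟨u, hu, hmu⟩ :=
    mem_historyModes.mp (heq ▸ mem_historyModes.mpr ⟨w₀, hw₀hist, rfl⟩)
  have hdu : d < stackHeight c u := by
    by_contra! hud
    refine (hno u w₀ ⟨hu.1.trans_lt hw₀, hmu, fun w hw₁ hw₂ => ?_⟩).not_ge hw₀hist.1
    rcases le_or_gt w t₁ with hw | hw
    · exact hu.stackHeight_le hw₁ hw
    · exact hud.trans (hw₀min w hw (hw₂.trans hw₀hist.1))
  have hd₀ : stackHeight c 0 ≤ d := by
    have := (hc.2 w₀ (hw₀hist.1.trans_lt h₂T)).stack_ne_nil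
    simp only [stackHeight, hc.1, List.length_singleton]
    exact List.length_pos_of_ne_nil this
  obtain ⟨u₀, hu₀, hu₀d⟩ := exists_isHistoryTime_stackHeight_eq
    (fun j hj => (hc.2 j (by omega)).length_stack_le) hd₀
    (hdu.trans_le (hu.stackHeight_le hu.1 le_rfl))
  obtain ⟨x, hx, hmx⟩ :=
    mem_historyModes.mp (heq.symm ▸ mem_historyModes.mpr ⟨u₀, hu₀, rfl⟩)
  rcases le_or_gt x t₁ with hxt | hxt
  · have hxd : stackHeight c x < d := hx.2 w₀ (by omega) hw₀hist.1
    have hxu : x < u₀ := by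
      by_contra! hux
      rcases hux.eq_or_lt with rfl | hlt
      · omega
      · have := hu₀.2 x hlt hxt
        omega
    refine (hno x u₀ ⟨hxu, hmx, fun w hw₁ hw₂ => ?_⟩).not_ge (hu₀.1.trans h₁₂.le)
    exact hx.stackHeight_le hw₁ (hw₂.trans (hu₀.1.trans h₁₂.le))
  · refine (hno u₀ x ⟨hu₀.1.trans_lt hxt, hmx.symm, fun w hw₁ hw₂ => ?_⟩).not_ge hx.1
    rcases le_or_gt w t₁ with hw | hw
    · exact hu₀.stackHeight_le hw₁ hw
    · exact hu₀d ▸ hw₀min w hw (hw₂.trans hx.1)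

theorem TraceUpTo.exists_isLoop [Fintype Q] [Fintype Γ] {T : ℕ} (hc : M.TraceUpTo c T)
    (hT : 2 ^ Fintype.card (Q × Γ) ≤ T) : ∃ u v, M.IsLoop c u v ∧ v < T := by
  obtain ⟨t₁, t₂, h₁₂, h₂T, heq⟩ := exists_historyModes_eq M c hT
  obtain ⟨u, v, hloop, hv⟩ := exists_isLoop_of_historyModes_eq hc h₁₂ h₂T heq
  exact ⟨u, v, hloop, by omega⟩

end UPDA

theorem stmt_13_general {Q Γ : Type*} [Fintype Q] [Fintype Γ] (M : UPDA Q Γ)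
    (hdet : M.Deterministic) (n m : ℕ)
    (hn : Fintype.card Q = n) (hm : Fintype.card Γ = m) :
    ∃ μ lam : ℕ, 1 ≤ lam ∧ μ + lam ≤ 2 ^ (n * m) ∧
      ∀ t, μ ≤ t → ∀ c, M.TraceUpTo c (t + lam) →
        (c t).1 = (c (t + lam)).1 ∧
        (c t).2.2.head? = (c (t + lam)).2.2.head? := by
  have hK : 2 ^ Fintype.card (Q × Γ) = 2 ^ (n * m) := by rw [Fintype.card_prod, hn, hm]
  by_cases hrun : ∃ c₀, M.TraceUpTo c₀ (2 ^ (n * m))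
  · obtain ⟨c₀, hc₀⟩ := hrun
    obtain ⟨u, v, hloop, hv⟩ := hc₀.exists_isLoop hK.le
    have huv := hloop.1
    refine ⟨u, v - u, by omega, by omega, fun t ht c hc => ?_⟩
    have hloop' : M.IsLoop c u v :=
      hloop.congr fun j hj => hc₀.eq_of_le hdet hc (by omega) (by omega)
    have := hloop'.mode_add_eq hdet hc.2 (s := t - u) (by omega)
    rwa [show u + (t - u) = t by omega, show v + (t - u) = t + (v - u) by omega] at this
  · have := Nat.one_le_two_pow (n := n * m)
    refine ⟨2 ^ (n * m) - 1, 1, le_rfl, by omega, fun t ht c hc => ?_⟩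
    exact (hrun ⟨c, hc.1, fun j hj => hc.2 j (by omega)⟩).elim

/-- for a unary dpda in normal form with `n` states and `m` stack
symbols, the sequence `(m_t)` of modes (state, top stack symbol) reached at each
step of the computation is ultimately periodic with `μ + λ ≤ 2^{nm}`. -/
theorem stmt_13 {Q Γ : Type*} [Fintype Q] [Fintype Γ] (M : UPDA Q Γ)
    (hdet : M.Deterministic) (hnf : M.NormalForm) (n m : ℕ)
    (hn : Fintype.card Q = n) (hm : Fintype.card Γ = m) :
    ∃ μ lam : ℕ, 1 ≤ lam ∧ μ + lam ≤ 2 ^ (n * m) ∧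
      ∀ t, μ ≤ t → ∀ c, M.TraceUpTo c (t + lam) →
        (c t).1 = (c (t + lam)).1 ∧
        (c t).2.2.head? = (c (t + lam)).2.2.head? :=
  stmt_13_general M hdet n m hn hm
end

section
/- For the grammar G constructed from a unary dpda M in normal form (with variables [qA]_0 and [qA]_1), the following hold for every mode [qA] and x ∈ a*: (1) [qA]_0 ⇒* x iff (q, x, A) ⊢* (exit[qA], ε, ε); (2) [qA]_1 ⇒* x iff (q, x, A) ⊢* (q', ε, γ) for some final state q' and nonempty stack string γ. -/
/-- The productions of the grammar `G` built from a unary dpda `M`: variables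
are `[qA]_b` with `b ∈ {false, true}` (written `(q, A, b)`), terminals are the
single letter `a` (written `Sum.inr ()`). -/
inductive GProd {Q Γ : Type*} (M : UPDA Q Γ) :
    Q × Γ × Bool → List ((Q × Γ × Bool) ⊕ Unit) → Prop
  | push1 {q A p B} : PMove.push p B ∈ M.δ q A →
      GProd M (q, A, true) [Sum.inl (p, B, true)]
  | push0 {q A p B q' k} : PMove.push p B ∈ M.δ q A →
      M.Reaches (p, 0, [B]) (q', k, []) →
      GProd M (q, A, false) [Sum.inl (p, B, false), Sum.inl (q', A, false)]
  | push01 {q A p B q' k} : PMove.push p B ∈ M.δ q A →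
      M.Reaches (p, 0, [B]) (q', k, []) →
      GProd M (q, A, true) [Sum.inl (p, B, false), Sum.inl (q', A, true)]
  | pop {q A p} : PMove.pop p ∈ M.δ q A → GProd M (q, A, false) []
  | readA {q A p b} : PMove.readA p ∈ M.δ q A →
      GProd M (q, A, b) [Sum.inr (), Sum.inl (p, A, b)]
  | readE {q A p b} : PMove.readE p ∈ M.δ q A →
      GProd M (q, A, b) [Sum.inl (p, A, b)]
  | fin {q A} : q ∈ M.final → GProd M (q, A, true) []

/-- Context-free derivation relation generated by a set `P` of productions. -/
def CFDerives {V T : Type*} (P : V → List (V ⊕ T) → Prop) :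
    List (V ⊕ T) → List (V ⊕ T) → Prop :=
  Relation.ReflTransGen (fun u v => ∃ x y N rhs, P N rhs ∧
    u = x ++ Sum.inl N :: y ∧ v = x ++ rhs ++ y)

/-! The word `a^k` is identified with `k`. For soundness, `[qA]_0` and `[qA]_1` are read as the sets
of exponents `k` described in (1) and (2); every production maps the sets of its right-hand
side into the set of its left-hand side, so the set of a sentential form can only grow along a
derivation. Determinism is what makes the exit state fixed by a `push` production the one the
derivation actually reaches. For completeness, induct on the length of the run: after a push,
either the pushed symbol is never popped, or the run splits at the moment it is. -/

namespace CFDerives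

variable {V T : Type*} {P : V → List (V ⊕ T) → Prop}

theorem single {N : V} {rhs : List (V ⊕ T)} (h : P N rhs) : CFDerives P [.inl N] rhs :=
  Relation.ReflTransGen.single ⟨[], [], N, rhs, h, rfl, by simp⟩

theorem append_context {u v : List (V ⊕ T)} (h : CFDerives P u v) (x y : List (V ⊕ T)) :
    CFDerives P (x ++ u ++ y) (x ++ v ++ y) :=
  Relation.ReflTransGen.lift (fun w => x ++ w ++ y)
    (fun _ _ ⟨x', y', N, rhs, hP, hu, hv⟩ =>
      ⟨x ++ x', y' ++ y, N, rhs, hP, by simp [hu], by simp [hv]⟩) _ _ h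

theorem append {u u' v v' : List (V ⊕ T)} (hu : CFDerives P u u') (hv : CFDerives P v v') :
    CFDerives P (u ++ v) (u' ++ v') :=
  Relation.ReflTransGen.trans (by simpa [CFDerives] using hu.append_context [] v)
    (by simpa [CFDerives] using hv.append_context u' [])

theorem replicate_of_pair {P : V → List (V ⊕ Unit) → Prop} {N : V} {X Y : V ⊕ Unit} {i j : ℕ}
    (hN : P N [X, Y]) (hX : CFDerives P [X] (List.replicate i (.inr ())))
    (hY : CFDerives P [Y] (List.replicate j (.inr ()))) :
    CFDerives P [.inl N] (List.replicate (i + j) (.inr ())) := by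
  rw [List.replicate_add]
  exact (single hN).trans (hX.append hY)

end CFDerives

namespace UPDA

variable {Q Γ : Type*} {M : UPDA Q Γ}

theorem Step.lift {q p : Q} {n m : ℕ} {γ γ' : List Γ} (h : M.Step (q, n, γ) (p, m, γ'))
    (d : ℕ) (α : List Γ) : M.Step (q, d + n, γ ++ α) (p, d + m, γ' ++ α) := by
  cases h with
  | readA hm => exact .readA hm
  | readE hm => exact .readE hm
  | pop hm => exact .pop hm
  | push hm => exact .push hm

theorem Reaches.lift {q p : Q} {n m : ℕ} {γ γ' : List Γ} (h : M.Reaches (q, n, γ) (p, m, γ'))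
    (d : ℕ) (α : List Γ) : M.Reaches (q, d + n, γ ++ α) (p, d + m, γ' ++ α) :=
  Relation.ReflTransGen.lift (fun c : Q × ℕ × List Γ => (c.1, d + c.2.1, c.2.2 ++ α))
    (fun _ _ hs => Step.lift hs d α) _ _ h

theorem Step.exists_eq_append {q p : Q} {n m : ℕ} {A : Γ} {β δ : List Γ}
    (h : M.Step (q, n, A :: β) (p, m, δ)) : ∃ δ', δ = δ' ++ β ∧ M.Step (q, n, [A]) (p, m, δ') := by
  cases h with
  | readA hm => exact ⟨[A], rfl, .readA hm⟩
  | readE hm => exact ⟨[A], rfl, .readE hm⟩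
  | pop hm => exact ⟨[], rfl, .pop hm⟩
  | push hm => exact ⟨[_, A], rfl, .push hm⟩

theorem Step.untranslate {q p : Q} {c n m : ℕ} {γ γ' : List Γ}
    (h : M.Step (q, c + n, γ) (p, m, γ')) : ∃ m', m = c + m' ∧ M.Step (q, n, γ) (p, m', γ') := by
  cases h with
  | readA hm => exact ⟨n + 1, by omega, .readA hm⟩
  | readE hm => exact ⟨n, rfl, .readE hm⟩
  | pop hm => exact ⟨n, rfl, .pop hm⟩
  | push hm => exact ⟨n, rfl, .push hm⟩

theorem not_step_nil (p : Q) (n : ℕ) (d : Q × ℕ × List Γ) : ¬ M.Step (p, n, []) d := by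
  rintro (_ | _ | _ | _)

theorem Step.rightUnique (hdet : M.Deterministic) : Relator.RightUnique M.Step := by
  intro c d e hd he
  cases hd <;> rename_i hm₁ <;> cases he <;> rename_i hm₂ <;>
    cases hdet _ _ _ _ hm₁ hm₂ <;> rfl

theorem Reaches.eq_of_nil {p : Q} {n : ℕ} {d : Q × ℕ × List Γ} (h : M.Reaches (p, n, []) d) :
    d = (p, n, []) := by
  rcases h.cases_head with rfl | ⟨e, hs, -⟩
  · rfl
  · exact absurd hs (not_step_nil p n e)

theorem Reaches.exit_unique (hdet : M.Deterministic) {c : Q × ℕ × List Γ} {p₁ p₂ : Q}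
    {k₁ k₂ : ℕ} (h₁ : M.Reaches c (p₁, k₁, [])) (h₂ : M.Reaches c (p₂, k₂, [])) :
    p₁ = p₂ ∧ k₁ = k₂ := by
  rcases Relation.ReflTransGen.total_of_right_unique (Step.rightUnique hdet) h₁ h₂ with h | h
  · simpa [eq_comm] using Reaches.eq_of_nil h
  · simpa using Reaches.eq_of_nil h

inductive ReachesIn (M : UPDA Q Γ) (c : Q × ℕ × List Γ) : ℕ → Q × ℕ × List Γ → Prop
  | refl : M.ReachesIn c 0 c
  | tail {n d e} : M.ReachesIn c n d → M.Step d e → M.ReachesIn c (n + 1) e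

theorem ReachesIn.reaches {c d : Q × ℕ × List Γ} {n : ℕ} (h : M.ReachesIn c n d) :
    M.Reaches c d := by
  induction h with
  | refl => exact .refl
  | tail _ hs ih => exact ih.tail hs

theorem Reaches.exists_reachesIn {c d : Q × ℕ × List Γ} (h : M.Reaches c d) :
    ∃ n, M.ReachesIn c n d := by
  induction h with
  | refl => exact ⟨0, .refl⟩
  | tail _ hs ih =>
    obtain ⟨n, hn⟩ := ih
    exact ⟨n + 1, hn.tail hs⟩

theorem ReachesIn.exists_head {c e : Q × ℕ × List Γ} {n : ℕ} (h : M.ReachesIn c (n + 1) e) :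
    ∃ d, M.Step c d ∧ M.ReachesIn d n e := by
  induction n generalizing e with
  | zero =>
    cases h with
    | tail hn hs =>
      cases hn
      exact ⟨e, hs, .refl⟩
  | succ n ih =>
    cases h with
    | tail hn hs =>
    obtain ⟨d, hcd, hd⟩ := ih hn
    exact ⟨d, hcd, hd.tail hs⟩

theorem ReachesIn.eq_of_nil {p : Q} {k n : ℕ} {e : Q × ℕ × List Γ}
    (h : M.ReachesIn (p, k, []) n e) : e = (p, k, []) := by
  induction h with
  | refl => rfl
  | tail _ hs ih => exact absurd (ih ▸ hs) (not_step_nil p k _)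

theorem ReachesIn.untranslate {q : Q} {c n : ℕ} {γ : List Γ} {e : Q × ℕ × List Γ}
    (h : M.ReachesIn (q, c, γ) n e) :
    ∃ k, e.2.1 = c + k ∧ M.ReachesIn (q, 0, γ) n (e.1, k, e.2.2) := by
  induction h with
  | refl => exact ⟨0, rfl, .refl⟩
  | @tail _ d e _ hs ih =>
    obtain ⟨p, m, δ⟩ := d
    obtain ⟨p', m', δ'⟩ := e
    obtain ⟨k, rfl, hrun⟩ := ih
    obtain ⟨k', rfl, hs'⟩ := Step.untranslate hs
    exact ⟨k', rfl, hrun.tail hs'⟩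

theorem ReachesIn.split {q : Q} {c n : ℕ} {B : Γ} {α : List Γ} {e : Q × ℕ × List Γ}
    (h : M.ReachesIn (q, c, B :: α) n e) :
    (∃ γ, γ ≠ [] ∧ e.2.2 = γ ++ α ∧ M.ReachesIn (q, c, [B]) n (e.1, e.2.1, γ)) ∨
    ∃ p k n₁ n₂, n₁ + n₂ = n ∧ M.ReachesIn (q, c, [B]) n₁ (p, k, []) ∧
      M.ReachesIn (p, k, α) n₂ e := by
  induction h with
  | refl => exact .inl ⟨[B], by simp, rfl, .refl⟩
  | @tail n d e _ hs ih =>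
    obtain ⟨p, k, σ⟩ := d
    rcases ih with ⟨γ, hγ, rfl, hrun⟩ | ⟨p₁, k₁, n₁, n₂, rfl, h₁, h₂⟩
    · obtain ⟨X, ρ, rfl⟩ := List.exists_cons_of_ne_nil hγ
      obtain ⟨p', k', σ'⟩ := e
      obtain ⟨τ, rfl, hτ⟩ := Step.exists_eq_append hs
      have hrun' : M.ReachesIn (q, c, [B]) (n + 1) (p', k', τ ++ ρ) :=
        hrun.tail (by simpa using hτ.lift 0 ρ)
      by_cases hnil : τ ++ ρ = []
      · obtain ⟨rfl, rfl⟩ := List.append_eq_nil_iff.mp hnil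
        exact .inr ⟨p', k', n + 1, 0, rfl, hrun', by simpa using ReachesIn.refl⟩
      · exact .inl ⟨τ ++ ρ, hnil, by simp, hrun'⟩
    · exact .inr ⟨p₁, k₁, n₁, n₂ + 1, rfl, h₁, h₂.tail hs⟩

section Soundness

open scoped Pointwise

def symbolLang (M : UPDA Q Γ) : (Q × Γ × Bool) ⊕ Unit → Set ℕ
  | .inr () => {1}
  | .inl (q, A, false) => {k | ∃ p, M.Reaches (q, 0, [A]) (p, k, [])}
  | .inl (q, A, true) =>
    {k | ∃ q' γ, q' ∈ M.final ∧ γ ≠ [] ∧ M.Reaches (q, 0, [A]) (q', k, γ)}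

def formLang (M : UPDA Q Γ) (w : List ((Q × Γ × Bool) ⊕ Unit)) : Set ℕ :=
  (w.map M.symbolLang).sum

theorem mem_formLang_replicate (k : ℕ) : k ∈ M.formLang (List.replicate k (.inr ())) := by
  induction k with
  | zero => simp [formLang]
  | succ k ih =>
    rw [List.replicate_succ, add_comm]
    exact Set.add_mem_add rfl ih

theorem add_mem_symbolLang {q p : Q} {A : Γ} {j k : ℕ} {b : Bool}
    (h : M.Reaches (q, 0, [A]) (p, j, [A])) (hk : k ∈ M.symbolLang (.inl (p, A, b))) :
    j + k ∈ M.symbolLang (.inl (q, A, b)) := by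
  cases b with
  | false =>
    obtain ⟨p', hp'⟩ := hk
    exact ⟨p', h.trans (by simpa [Reaches] using hp'.lift j [])⟩
  | true =>
    obtain ⟨q', γ, hq', hγ, hr⟩ := hk
    exact ⟨q', γ, hq', hγ, h.trans (by simpa [Reaches] using hr.lift j [])⟩

theorem Reaches.of_push_of_exit (hdet : M.Deterministic) {q p p' q' : Q} {A B : Γ} {k₀ k : ℕ}
    (hm : PMove.push p B ∈ M.δ q A) (hexit : M.Reaches (p, 0, [B]) (q', k₀, []))
    (h : M.Reaches (p, 0, [B]) (p', k, [])) : M.Reaches (q, 0, [A]) (q', k, [A]) := by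
  obtain ⟨rfl, -⟩ := Reaches.exit_unique hdet h hexit
  exact .head (.push hm) (by simpa [Reaches] using h.lift 0 [A])

theorem formLang_subset_symbolLang (hdet : M.Deterministic) {N : Q × Γ × Bool}
    {rhs : List ((Q × Γ × Bool) ⊕ Unit)} (h : GProd M N rhs) :
    M.formLang rhs ⊆ M.symbolLang (.inl N) := by
  cases h <;> intro k hk <;>
    simp only [formLang, List.map_cons, List.map_nil, List.sum_cons, List.sum_nil, add_zero] at hk
  case push1 hm =>
    obtain ⟨q', γ, hq', hγ, hr⟩ := hk
    exact ⟨q', γ ++ [_], hq', by simp, .head (.push hm) (by simpa [Reaches] using hr.lift 0 [_])⟩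
  case push0 hm hexit | push01 hm hexit =>
    obtain ⟨k₁, ⟨p', h₁⟩, k₂, h₂, rfl⟩ := Set.mem_add.mp hk
    exact add_mem_symbolLang (Reaches.of_push_of_exit hdet hm hexit h₁) h₂
  case pop hm =>
    obtain rfl := Set.mem_zero.mp hk
    exact ⟨_, .single (.pop hm)⟩
  case readA hm =>
    obtain ⟨k', hk', rfl⟩ := Set.singleton_add.subset hk
    exact add_mem_symbolLang (.single (.readA hm)) hk'
  case readE hm => simpa using add_mem_symbolLang (.single (.readE hm)) hk
  case fin hq =>
    obtain rfl := Set.mem_zero.mp hk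
    exact ⟨_, [_], hq, by simp, .refl⟩

theorem formLang_subset_of_cfDerives (hdet : M.Deterministic)
    {u v : List ((Q × Γ × Bool) ⊕ Unit)} (h : CFDerives (GProd M) u v) :
    M.formLang v ⊆ M.formLang u := by
  induction h with
  | refl => exact subset_rfl
  | tail _ hstep ih =>
    obtain ⟨x, y, N, rhs, hP, rfl, rfl⟩ := hstep
    refine subset_trans ?_ ih
    simp only [formLang, List.map_append, List.map_cons, List.sum_append, List.sum_cons,
      add_assoc]
    exact Set.add_subset_add_left
      (Set.add_subset_add_right (formLang_subset_symbolLang hdet hP))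

theorem mem_symbolLang_of_cfDerives (hdet : M.Deterministic) {N : Q × Γ × Bool} {k : ℕ}
    (h : CFDerives (GProd M) [.inl N] (List.replicate k (.inr ()))) :
    k ∈ M.symbolLang (.inl N) := by
  simpa [formLang] using formLang_subset_of_cfDerives hdet h (mem_formLang_replicate k)

end Soundness

theorem cfDerives_false_of_reachesIn (n : ℕ) :
    ∀ {q p : Q} {A : Γ} {k : ℕ}, M.ReachesIn (q, 0, [A]) n (p, k, []) →
      CFDerives (GProd M) [.inl (q, A, false)] (List.replicate k (.inr ())) := by
  induction n using Nat.strong_induction_on with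
  | _ n ih =>
  intro q p A k h
  obtain _ | n := n
  · cases h
  obtain ⟨d, hs, hrest⟩ := h.exists_head
  cases hs with
  | readA hm =>
    obtain ⟨k', rfl, hrest⟩ := hrest.untranslate
    simpa using CFDerives.replicate_of_pair (GProd.readA hm) (i := 1) .refl (ih n (by omega) hrest)
  | readE hm => exact (CFDerives.single (GProd.readE hm)).trans (ih n (by omega) hrest)
  | pop hm =>
    cases hrest.eq_of_nil
    exact CFDerives.single (GProd.pop hm)
  | push hm =>
    rcases hrest.split with ⟨γ, -, hγ, -⟩ | ⟨q₁, k₁, n₁, n₂, rfl, h₁, h₂⟩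
    · simp at hγ
    · obtain ⟨k₂, rfl, h₂⟩ := h₂.untranslate
      exact CFDerives.replicate_of_pair (GProd.push0 hm h₁.reaches)
        (ih n₁ (by omega) h₁) (ih n₂ (by omega) h₂)

theorem cfDerives_true_of_reachesIn (n : ℕ) :
    ∀ {q q' : Q} {A : Γ} {k : ℕ} {γ : List Γ}, q' ∈ M.final → γ ≠ [] →
      M.ReachesIn (q, 0, [A]) n (q', k, γ) →
      CFDerives (GProd M) [.inl (q, A, true)] (List.replicate k (.inr ())) := by
  induction n using Nat.strong_induction_on with
  | _ n ih =>
  intro q q' A k γ hq' hγ h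
  obtain _ | n := n
  · cases h
    exact CFDerives.single (GProd.fin hq')
  obtain ⟨d, hs, hrest⟩ := h.exists_head
  cases hs with
  | readA hm =>
    obtain ⟨k', rfl, hrest⟩ := hrest.untranslate
    simpa using
      CFDerives.replicate_of_pair (GProd.readA hm) (i := 1) .refl (ih n (by omega) hq' hγ hrest)
  | readE hm =>
    exact (CFDerives.single (GProd.readE hm)).trans (ih n (by omega) hq' hγ hrest)
  | pop hm => exact absurd (congrArg (·.2.2) hrest.eq_of_nil) hγ
  | push hm =>
    rcases hrest.split with ⟨γ', hγ', rfl, h₁⟩ | ⟨q₁, k₁, n₁, n₂, rfl, h₁, h₂⟩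
    · exact (CFDerives.single (GProd.push1 hm)).trans (ih n (by omega) hq' hγ' h₁)
    · obtain ⟨k₂, rfl, h₂⟩ := h₂.untranslate
      exact CFDerives.replicate_of_pair (GProd.push01 hm h₁.reaches)
        (cfDerives_false_of_reachesIn n₁ h₁) (ih n₂ (by omega) hq' hγ h₂)

end UPDA

theorem stmt_16_general {Q Γ : Type*} (M : UPDA Q Γ) (hdet : M.Deterministic) :
    ∀ (q : Q) (A : Γ) (k : ℕ),
      (CFDerives (GProd M) [Sum.inl (q, A, false)]
          (List.replicate k (Sum.inr ())) ↔
        ∃ p, M.Reaches (q, 0, [A]) (p, k, [])) ∧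
      (CFDerives (GProd M) [Sum.inl (q, A, true)]
          (List.replicate k (Sum.inr ())) ↔
        ∃ (q' : Q) (γ : List Γ), q' ∈ M.final ∧ γ ≠ [] ∧
          M.Reaches (q, 0, [A]) (q', k, γ)) := by
  intro q A k
  refine ⟨⟨UPDA.mem_symbolLang_of_cfDerives hdet, ?_⟩,
    ⟨UPDA.mem_symbolLang_of_cfDerives hdet, ?_⟩⟩
  · rintro ⟨p, h⟩
    obtain ⟨n, hn⟩ := h.exists_reachesIn
    exact UPDA.cfDerives_false_of_reachesIn n hn
  · rintro ⟨q', γ, hq', hγ, h⟩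
    obtain ⟨n, hn⟩ := h.exists_reachesIn
    exact UPDA.cfDerives_true_of_reachesIn n hq' hγ hn

/-- correctness of the grammar `G` built from a unary dpda `M` in
normal form: for every mode `[qA]` and every `x = a^k`,
(1) `[qA]_0 ⇒* x` iff `(q, x, A) ⊢* (exit[qA], ε, ε)` (the exit state being the
unique state reachable with empty stack), and
(2) `[qA]_1 ⇒* x` iff `(q, x, A) ⊢* (q', ε, γ)` for some final `q'` and
nonempty `γ`. -/
theorem stmt_16 {Q Γ : Type*} (M : UPDA Q Γ) (hdet : M.Deterministic)
    (hnf : M.NormalForm) :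
    ∀ (q : Q) (A : Γ) (k : ℕ),
      (CFDerives (GProd M) [Sum.inl (q, A, false)]
          (List.replicate k (Sum.inr ())) ↔
        ∃ p, M.Reaches (q, 0, [A]) (p, k, [])) ∧
      (CFDerives (GProd M) [Sum.inl (q, A, true)]
          (List.replicate k (Sum.inr ())) ↔
        ∃ (q' : Q) (γ : List Γ), q' ∈ M.final ∧ γ ≠ [] ∧
          M.Reaches (q, 0, [A]) (q', k, γ)) :=
  stmt_16_general M hdet
end

section
/- For every unary pda M in normal form with n states accepting by final states, there exists an equivalent pda M' in normal form with 2n + 1 states and the same stack alphabet such that every input word w is accepted by M' if and only if the state of M' reached immediately after reading the last symbol of w is final; moreover, if M is deterministic then M' is deterministic. -/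
/-! `M'` runs `M` one input symbol behind. When `M` reads, `M'` only moves to a copy `q̃` of
the new state, recording that a read is pending. The pending read is performed as soon as `M` is in
a final state, where `M'` reads into `q` itself, and otherwise in place of the next read of `M`.
Hence `M'` enters a final state only by reading, at a moment when `M` has consumed the same input
and is final; a fresh start state, final iff `M` accepts the empty word, covers the empty input.
Every move of `M` is replaced by one move of `M'`, so determinism and the normal form carry over,
and as `Z0` is never popped the stack is never empty, so a pending read can always be performed. -/

namespace PMove

variable {Q Q' Γ : Type*}

def map (f : Q → Q') : PMove Q Γ → PMove Q' Γ
  | readA p => readA (f p)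
  | readE p => readE (f p)
  | pop p => pop (f p)
  | push p B => push (f p) B

theorem map_injective {f : Q → Q'} (hf : Function.Injective f) :
    Function.Injective (map f : PMove Q Γ → PMove Q' Γ) := by
  intro m₁ m₂ h
  cases m₁ <;> cases m₂ <;> simp_all [map, hf.eq_iff]

/-- The configuration reached by the move `m` from a configuration `(q, n, A :: γ)`. -/
def next : PMove Q Γ → ℕ → Γ → List Γ → Q × ℕ × List Γ
  | readA p, n, A, γ => (p, n + 1, A :: γ)
  | readE p, n, A, γ => (p, n, A :: γ)
  | pop p, n, _, γ => (p, n, γ)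
  | push p B, n, A, γ => (p, n, B :: A :: γ)

/-- The move of `M.delayed` simulating a move of `M` made with no read pending: a read of `M`
becomes pending. -/
def delayRead : PMove Q Γ → PMove (Option (Q ⊕ Q)) Γ
  | readA p => readE (some (.inr p))
  | readE p => readE (some (.inl p))
  | pop p => pop (some (.inl p))
  | push p B => push (some (.inl p)) B

@[simp]
theorem next_delayRead_count (m : PMove Q Γ) (n : ℕ) (A : Γ) (γ : List Γ) :
    (m.delayRead.next n A γ).2.1 = n := by
  cases m <;> rfl

end PMove

namespace UPDA

open PMove

variable {Q Q' Γ : Type*} {M : UPDA Q Γ}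

theorem Step.of_mem {q : Q} {A : Γ} {m : PMove Q Γ} (h : m ∈ M.δ q A) (n : ℕ) (γ : List Γ) :
    M.Step (q, n, A :: γ) (m.next n A γ) := by
  cases m
  exacts [.readA h, .readE h, .pop h, .push h]

theorem Step.exists_mem {c c' : Q × ℕ × List Γ} (h : M.Step c c') :
    ∃ q n A γ, ∃ m ∈ M.δ q A, c = (q, n, A :: γ) ∧ c' = m.next n A γ := by
  rcases h with ⟨h⟩ | ⟨h⟩ | ⟨h⟩ | ⟨h⟩ <;> exact ⟨_, _, _, _, _, h, rfl, rfl⟩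

theorem Z0_mem_of_reaches (hpop : ∀ q p, pop p ∉ M.δ q M.Z0) {c c' : Q × ℕ × List Γ}
    (h : M.Reaches c c') (hc : M.Z0 ∈ c.2.2) : M.Z0 ∈ c'.2.2 := by
  induction h with
  | refl => exact hc
  | tail _ hstep ih =>
    obtain ⟨q, n, A, γ, m, hm, rfl, rfl⟩ := hstep.exists_mem
    cases m with
    | pop p =>
      rcases List.mem_cons.1 ih with hA | hγ
      · exact absurd (hA ▸ hm) (hpop q p)
      · exact hγ
    | _ => simp_all [next]

def AcceptsAtLastRead (M : UPDA Q Γ) (k : ℕ) : Prop :=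
  (k = 0 ∧ M.start ∈ M.final) ∨
    (1 ≤ k ∧ ∃ (q : Q) (A : Γ) (γ : List Γ) (p : Q),
      M.Reaches (M.start, 0, [M.Z0]) (q, k - 1, A :: γ) ∧
      PMove.readA p ∈ M.δ q A ∧ p ∈ M.final)

theorem AcceptsAtLastRead.accepts {k : ℕ} (h : M.AcceptsAtLastRead k) : M.Accepts k := by
  rcases h with ⟨rfl, hf⟩ | ⟨hk, q, A, γ, p, hr, hm, hp⟩
  · exact ⟨M.start, [M.Z0], .refl, hf⟩
  · obtain ⟨k, rfl⟩ := Nat.exists_eq_add_of_le' hk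
    exact ⟨p, A :: γ, hr.tail (.readA hm), hp⟩

section Relabel

@[simps]
def relabel (M : UPDA Q Γ) (e : Q ≃ Q') : UPDA Q' Γ where
  start := e M.start
  Z0 := M.Z0
  final := e.symm ⁻¹' M.final
  δ q A := map e.symm ⁻¹' M.δ (e.symm q) A

variable (e : Q ≃ Q')

theorem Step.relabel {c c' : Q × ℕ × List Γ} (h : M.Step c c') :
    (M.relabel e).Step (Prod.map e id c) (Prod.map e id c') := by
  cases h <;> constructor <;> simpa [map]

theorem Step.of_relabel {c c' : Q' × ℕ × List Γ} (h : (M.relabel e).Step c c') :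
    M.Step (Prod.map e.symm id c) (Prod.map e.symm id c') := by
  cases h <;> constructor <;> assumption

theorem relabel_reaches_iff {q p : Q} {n n' : ℕ} {γ γ' : List Γ} :
    (M.relabel e).Reaches (e q, n, γ) (e p, n', γ') ↔ M.Reaches (q, n, γ) (p, n', γ') := by
  constructor
  · intro h
    simpa [Function.onFun, Reaches] using Relation.ReflTransGen.lift (Prod.map e.symm id)
      (fun _ _ => Step.of_relabel e) _ _ h
  · exact Relation.ReflTransGen.lift (Prod.map e id) (fun _ _ => Step.relabel e) _ _

theorem NormalForm.relabel (hM : M.NormalForm) : (M.relabel e).NormalForm :=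
  ⟨fun _ _ _ h => hM.1 _ _ _ h, fun _ _ h => hM.2 _ _ h⟩

theorem Deterministic.relabel (hM : M.Deterministic) : (M.relabel e).Deterministic :=
  fun _ _ _ _ h₁ h₂ => map_injective e.symm.injective (hM _ _ _ _ h₁ h₂)

theorem relabel_accepts_iff {k : ℕ} : (M.relabel e).Accepts k ↔ M.Accepts k := by
  simp only [Accepts, e.surjective.exists, relabel_start, relabel_Z0, relabel_final,
    relabel_reaches_iff, Set.mem_preimage, Equiv.symm_apply_apply]

theorem relabel_acceptsAtLastRead_iff {k : ℕ} :
    (M.relabel e).AcceptsAtLastRead k ↔ M.AcceptsAtLastRead k := by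
  simp only [AcceptsAtLastRead, e.surjective.exists, relabel_start, relabel_Z0, relabel_final,
    relabel_δ, relabel_reaches_iff, Set.mem_preimage, Equiv.symm_apply_apply, map]

end Relabel

section Delayed

/-- `none` is the fresh start state `q₀'`, `some (.inl q)` is `q` and `some (.inr q)` is `q̃`:
`M` is in state `q`, and the last symbol read by `M` is still to be read. -/
def delayed (M : UPDA Q Γ) : UPDA (Option (Q ⊕ Q)) Γ where
  start := none
  Z0 := M.Z0
  final
    | none => M.Accepts 0
    | some (.inl q) => q ∈ M.final
    | some (.inr _) => False
  δ
    | none, A => delayRead '' M.δ M.start A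
    | some (.inl q), A => delayRead '' M.δ q A
    | some (.inr q), A =>
      {m | q ∈ M.final ∧ m = readA (some (.inl q)) ∨
        q ∉ M.final ∧ m ∈ map (some ∘ .inr) '' M.δ q A}

variable (M) in
def undelay : Option (Q ⊕ Q) × ℕ × List Γ → Q × ℕ × List Γ
  | (none, n, γ) => (M.start, n, γ)
  | (some (.inl q), n, γ) => (q, n, γ)
  | (some (.inr q), n, γ) => (q, n + 1, γ)

theorem undelay_next_delayRead (m : PMove Q Γ) (n : ℕ) (A : Γ) (γ : List Γ) :
    M.undelay (m.delayRead.next n A γ) = m.next n A γ := by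
  cases m <;> rfl

theorem undelay_next_map_inr (m : PMove Q Γ) (n : ℕ) (A : Γ) (γ : List Γ) :
    M.undelay ((m.map (some ∘ .inr)).next n A γ) = m.next (n + 1) A γ := by
  cases m <;> rfl

theorem NormalForm.delayed (hM : M.NormalForm) : M.delayed.NormalForm := by
  constructor
  · rintro (_ | q | q) A p hm
    rotate_left 2
    · obtain ⟨-, h⟩ | ⟨-, m, hm, h⟩ := hm
      · cases h
      · cases m <;> cases h
        exact hM.1 _ _ _ hm
    all_goals
      obtain ⟨m, hm, h⟩ := hm
      cases m <;> cases h
      exact hM.1 _ _ _ hm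
  · rintro (_ | q | q) p hm
    rotate_left 2
    · obtain ⟨-, h⟩ | ⟨-, m, hm, h⟩ := hm
      · cases h
      · cases m <;> cases h
        exact hM.2 _ _ hm
    all_goals
      obtain ⟨m, hm, h⟩ := hm
      cases m <;> cases h
      exact hM.2 _ _ hm

theorem Deterministic.delayed (hM : M.Deterministic) : M.delayed.Deterministic := by
  rintro (_ | q | q) A m₁ m₂ h₁ h₂
  rotate_left 2
  · rcases h₁ with ⟨hq, rfl⟩ | ⟨hq, u₁, hu₁, rfl⟩ <;>
      rcases h₂ with ⟨hq', rfl⟩ | ⟨hq', u₂, hu₂, rfl⟩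
    · rfl
    · exact absurd hq hq'
    · exact absurd hq' hq
    · rw [hM _ _ _ _ hu₁ hu₂]
  all_goals
    obtain ⟨u₁, hu₁, rfl⟩ := h₁
    obtain ⟨u₂, hu₂, rfl⟩ := h₂
    rw [hM _ _ _ _ hu₁ hu₂]

theorem reaches_of_delayed_step {c c' : Option (Q ⊕ Q) × ℕ × List Γ} (h : M.delayed.Step c c') :
    M.Reaches (M.undelay c) (M.undelay c') := by
  obtain ⟨s, n, A, γ, m, hm, rfl, rfl⟩ := h.exists_mem
  rcases s with _ | q | q
  rotate_left 2
  · obtain ⟨-, rfl⟩ | ⟨-, u, hu, rfl⟩ := hm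
    · exact .refl
    · rw [undelay_next_map_inr]
      exact .single (.of_mem hu _ _)
  all_goals
    obtain ⟨u, hu, rfl⟩ := hm
    rw [undelay_next_delayRead]
    exact .single (.of_mem hu _ _)

theorem reaches_of_delayed_reaches {c c' : Option (Q ⊕ Q) × ℕ × List Γ}
    (h : M.delayed.Reaches c c') : M.Reaches (M.undelay c) (M.undelay c') :=
  Relation.ReflTransGen.lift' M.undelay (fun _ _ => reaches_of_delayed_step) _ _ h

theorem delayed_reaches_of_step {c : Option (Q ⊕ Q) × ℕ × List Γ} {d : Q × ℕ × List Γ}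
    (h : M.Step (M.undelay c) d) : ∃ c', M.undelay c' = d ∧ M.delayed.Reaches c c' := by
  obtain ⟨q, n, A, γ, m, hm, hc, rfl⟩ := h.exists_mem
  obtain ⟨s, n', γ'⟩ := c
  rcases s with _ | q' | q' <;> simp only [undelay, Prod.mk.injEq] at hc <;>
    obtain ⟨rfl, rfl, rfl⟩ := hc
  rotate_left 2
  · by_cases hq : q' ∈ M.final
    · have hread : M.delayed.Step (some (.inr q'), n', A :: γ) (some (.inl q'), n' + 1, A :: γ) :=
        .of_mem (M := M.delayed) (q := some (.inr q')) (Or.inl ⟨hq, rfl⟩) _ _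
      exact ⟨_, undelay_next_delayRead m _ A γ,
        .head hread (.single (.of_mem (M := M.delayed) (q := some (.inl q')) ⟨m, hm, rfl⟩ _ _))⟩
    · exact ⟨_, undelay_next_map_inr m n' A γ,
        .single (.of_mem (M := M.delayed) (q := some (.inr q')) (Or.inr ⟨hq, m, hm, rfl⟩) _ _)⟩
  · exact ⟨_, undelay_next_delayRead m _ A γ,
      .single (.of_mem (M := M.delayed) (q := none) ⟨m, hm, rfl⟩ _ _)⟩
  · exact ⟨_, undelay_next_delayRead m _ A γ,
      .single (.of_mem (M := M.delayed) (q := some (.inl q')) ⟨m, hm, rfl⟩ _ _)⟩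

theorem delayed_reaches_of_reaches {c : Option (Q ⊕ Q) × ℕ × List Γ} {d : Q × ℕ × List Γ}
    (h : M.Reaches (M.undelay c) d) : ∃ c', M.undelay c' = d ∧ M.delayed.Reaches c c' := by
  induction h with
  | refl => exact ⟨c, rfl, .refl⟩
  | tail _ hstep ih =>
    obtain ⟨c', rfl, hc'⟩ := ih
    obtain ⟨c'', rfl, hc''⟩ := delayed_reaches_of_step hstep
    exact ⟨c'', rfl, hc'.trans hc''⟩

theorem eq_of_delayed_reaches_none {c : Option (Q ⊕ Q) × ℕ × List Γ} {n : ℕ} {γ : List Γ}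
    (h : M.delayed.Reaches c (none, n, γ)) : c = (none, n, γ) := by
  rcases h.cases_tail with h | ⟨c', -, hstep⟩
  · exact h.symm
  obtain ⟨s, n, A, γ, m, hm, rfl, h⟩ := hstep.exists_mem
  rcases s with _ | q | q
  rotate_left 2
  · obtain ⟨-, rfl⟩ | ⟨-, u, -, rfl⟩ := hm
    · cases h
    · cases u <;> cases h
  all_goals
    obtain ⟨u, -, rfl⟩ := hm
    cases u <;> cases h

theorem exists_final_read_of_delayed_reaches {c : Option (Q ⊕ Q) × ℕ × List Γ}
    (h : M.delayed.Reaches (none, 0, [M.Z0]) c) (hc : ∀ q, c.1 ≠ some (.inr q))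
    (hk : 1 ≤ c.2.1) :
    ∃ q A γ p, M.delayed.Reaches (none, 0, [M.Z0]) (q, c.2.1 - 1, A :: γ) ∧
      readA p ∈ M.delayed.δ q A ∧ p ∈ M.delayed.final := by
  induction h with
  | refl => simp at hk
  | tail hr hstep ih =>
    obtain ⟨s, n, A, γ, m, hm, rfl, rfl⟩ := hstep.exists_mem
    rcases s with _ | q | q
    · obtain ⟨u, -, rfl⟩ := hm
      cases eq_of_delayed_reaches_none hr
      simp at hk
    · obtain ⟨u, -, rfl⟩ := hm
      simpa using ih (by simp) (by simpa using hk)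
    · obtain ⟨hq, rfl⟩ | ⟨-, u, -, rfl⟩ := hm
      · exact ⟨some (.inr q), A, γ, some (.inl q), hr, Or.inl ⟨hq, rfl⟩, hq⟩
      · cases u <;> exact absurd rfl (hc _)

theorem accepts_of_delayed_accepts {k : ℕ} (h : M.delayed.Accepts k) : M.Accepts k := by
  obtain ⟨s, γ, hr, hs⟩ := h
  rcases s with _ | q | q
  · cases eq_of_delayed_reaches_none hr
    exact hs
  · exact ⟨q, γ, reaches_of_delayed_reaches hr, hs⟩
  · exact hs.elim

theorem delayed_accepts_iff (hpop : ∀ q p, pop p ∉ M.δ q M.Z0) {k : ℕ} :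
    M.delayed.Accepts k ↔ M.Accepts k := by
  refine ⟨accepts_of_delayed_accepts, fun hacc => ?_⟩
  obtain ⟨p, γ, hr, hp⟩ := hacc
  obtain ⟨⟨s, n, γ'⟩, hc, hr'⟩ := delayed_reaches_of_reaches (c := (none, 0, [M.Z0])) hr
  rcases s with _ | q | q <;> simp only [undelay, Prod.mk.injEq] at hc <;>
    obtain ⟨rfl, rfl, rfl⟩ := hc
  · cases eq_of_delayed_reaches_none hr'
    exact ⟨none, [M.Z0], .refl, _, _, hr, hp⟩
  · exact ⟨_, _, hr', hp⟩
  · obtain ⟨A, γ, rfl⟩ := List.exists_cons_of_ne_nil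
      (List.ne_nil_of_mem (Z0_mem_of_reaches hpop hr (List.mem_singleton_self _)))
    exact ⟨_, _, hr'.tail (.of_mem (M := M.delayed) (q := some (.inr q)) (Or.inl ⟨hp, rfl⟩) _ _),
      hp⟩

theorem delayed_acceptsAtLastRead {k : ℕ} (h : M.delayed.Accepts k) :
    M.delayed.AcceptsAtLastRead k := by
  rcases Nat.eq_zero_or_pos k with rfl | hk
  · exact Or.inl ⟨rfl, accepts_of_delayed_accepts h⟩
  obtain ⟨s, γ, hr, hs⟩ := h
  rcases s with _ | q | q
  · cases eq_of_delayed_reaches_none hr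
    exact absurd hk (lt_irrefl 0)
  · exact Or.inr ⟨hk, exists_final_read_of_delayed_reaches hr (by simp) hk⟩
  · exact hs.elim

end Delayed

end UPDA

/-- for every unary pda `M` in normal form with `n` states,
accepting by final states, there is an equivalent pda `M'` in normal form with
`2n + 1` states and the same stack alphabet that accepts or rejects every input
immediately after reading its last symbol: `a^k` is accepted by `M'` iff either
`k = 0` and the start state of `M'` is final, or the state of `M'` entered by
the move reading the `k`-th (last) input symbol is final. Moreover, if `M` is
deterministic then so is `M'`. -/
theorem stmt_18 {Q Γ : Type*} [Fintype Q] (M : UPDA Q Γ) (hnf : M.NormalForm)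
    (n : ℕ) (hn : Fintype.card Q = n) :
    ∃ (Q' : Type) (_ : Fintype Q') (M' : UPDA Q' Γ),
      Nat.card Q' = 2 * n + 1 ∧
      M'.NormalForm ∧
      (∀ k : ℕ, M'.Accepts k ↔ M.Accepts k) ∧
      (∀ k : ℕ, M'.Accepts k ↔
        ((k = 0 ∧ M'.start ∈ M'.final) ∨
          (1 ≤ k ∧ ∃ (q : Q') (A : Γ) (γ : List Γ) (p : Q'),
            M'.Reaches (M'.start, 0, [M'.Z0]) (q, k - 1, A :: γ) ∧
            PMove.readA p ∈ M'.δ q A ∧ p ∈ M'.final))) ∧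
      (M.Deterministic → M'.Deterministic) := by
  have hcard : Fintype.card (Option (Q ⊕ Q)) = 2 * n + 1 := by
    simp [hn, two_mul]
  let e := Fintype.equivFinOfCardEq hcard
  refine ⟨Fin (2 * n + 1), inferInstance, M.delayed.relabel e, by simp, hnf.delayed.relabel e,
    fun k => (UPDA.relabel_accepts_iff e).trans (UPDA.delayed_accepts_iff hnf.2), fun k => ?_,
    fun hM => hM.delayed.relabel e⟩
  exact ⟨fun h => (UPDA.relabel_acceptsAtLastRead_iff e).2
    (UPDA.delayed_acceptsAtLastRead ((UPDA.relabel_accepts_iff e).1 h)),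
    UPDA.AcceptsAtLastRead.accepts⟩
end

section
/- For each m > 0, the language B_m = {a^k : the (k mod' 2^m)-th letter of the de Bruijn word w_m of order m is 1} is properly 2^m-cyclic, where x mod' y = x mod y if x mod y > 0 and y otherwise. -/
/-!
A shift `l` preserving the language makes the cyclic word `i ↦ w[i % 2^m]` `l`-periodic.
Since the suffix of `w` of length `m - 1` repeats its prefix, `w` itself is the beginning of
that `2^m`-periodic cyclic word, so the factor of length `m` at position `l` equals the one at
position `0`; uniqueness of occurrences then forces `l = 0`.
-/

theorem Nat.ite_add_one_mod_sub_one (N a : ℕ) :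
    (if (a + 1) % N = 0 then N else (a + 1) % N) - 1 = a % N := by
  rcases N.eq_zero_or_pos with rfl | hN
  · simp
  have ha := Nat.mod_lt a hN
  rcases Nat.lt_or_ge (a % N + 1) N with h | h
  · rw [← Nat.mod_add_mod, Nat.mod_eq_of_lt h, if_neg (by omega)]
    omega
  · rw [← Nat.mod_add_mod, show a % N + 1 = N by omega, Nat.mod_self, if_pos rfl]
    omega

namespace List

variable {α : Type*}

theorem getD_add_eq_of_take_eq_drop {w : List α} {p N t : ℕ} (h : w.take p = w.drop N)
    (ht : t < p) (d : α) : w.getD (N + t) d = w.getD t d := by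
  have := congrArg (·[t]?) h
  simp only [getElem?_take_of_lt ht, getElem?_drop] at this
  simp only [getD_eq_getElem?_getD, this]

theorem getD_eq_getD_mod_of_take_eq_drop {w : List α} {p N : ℕ} (h : w.take p = w.drop N)
    (d : α) : ∀ j < N + p, w.getD j d = w.getD (j % N) d := by
  rcases N.eq_zero_or_pos with rfl | hN
  · simp
  intro j
  induction j using Nat.strong_induction_on with
  | _ j ih =>
    intro hj
    rcases Nat.lt_or_ge j N with hjN | hjN
    · rw [Nat.mod_eq_of_lt hjN]
    · obtain ⟨t, rfl⟩ := Nat.exists_eq_add_of_le hjN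
      rw [getD_add_eq_of_take_eq_drop h (by omega), Nat.add_mod_left]
      exact ih t (by omega) (by omega)

theorem take_drop_eq_take_of_periodic {w : List α} {N l n : ℕ} {d : α}
    (hw : ∀ j < w.length, w.getD j d = w.getD (j % N) d)
    (hper : Function.Periodic (fun i ↦ w.getD (i % N) d) l) (hl : l + n ≤ w.length) :
    (w.drop l).take n = w.take n := by
  refine ext_getElem (by simp only [length_take, length_drop]; omega) fun j hj _ ↦ ?_
  simp only [length_take, length_drop] at hj
  simp only [getElem_take, getElem_drop]
  rw [← getD_eq_getElem _ d, ← getD_eq_getElem _ d]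
  calc w.getD (l + j) d = w.getD ((j + l) % N) d := by rw [hw _ (by omega), add_comm]
    _ = w.getD (j % N) d := hper j
    _ = w.getD j d := (hw j (by omega)).symm

end List

theorem periodic_getD_mod_of_forall_iff {w : List Bool} {N l : ℕ}
    (h : ∀ k : ℕ, w.getD ((if k % N = 0 then N else k % N) - 1) false = true ↔
      w.getD ((if (k + l) % N = 0 then N else (k + l) % N) - 1) false = true) :
    Function.Periodic (fun i ↦ w.getD (i % N) false) l := fun i ↦ by
  have := h (i + 1)
  rw [add_right_comm, Nat.ite_add_one_mod_sub_one, Nat.ite_add_one_mod_sub_one] at this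
  exact (Bool.eq_iff_iff.mpr this).symm

theorem stmt_19_general (m : ℕ) (w : List Bool)
    (hlen : w.length = 2 ^ m + m - 1)
    (huniq : ∀ u : List Bool, u.length = m →
      ∃! i : ℕ, i + m ≤ w.length ∧ (w.drop i).take m = u)
    (hps : w.take (m - 1) = w.drop (2 ^ m)) :
    (∀ k : ℕ,
      (w.getD ((if k % 2 ^ m = 0 then 2 ^ m else k % 2 ^ m) - 1) false = true) ↔
      (w.getD ((if (k + 2 ^ m) % 2 ^ m = 0 then 2 ^ m
        else (k + 2 ^ m) % 2 ^ m) - 1) false = true)) ∧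
    (∀ l, 1 ≤ l → l < 2 ^ m →
      ¬ (∀ k : ℕ,
        (w.getD ((if k % 2 ^ m = 0 then 2 ^ m else k % 2 ^ m) - 1) false
          = true) ↔
        (w.getD ((if (k + l) % 2 ^ m = 0 then 2 ^ m
          else (k + l) % 2 ^ m) - 1) false = true))) := by
  refine ⟨fun k ↦ by rw [Nat.add_mod_right], fun l hl hlN hper ↦ ?_⟩
  have hN := Nat.one_le_two_pow (n := m)
  have hfactor : (w.drop l).take m = w.take m :=
    List.take_drop_eq_take_of_periodic
      (fun j hj ↦ List.getD_eq_getD_mod_of_take_eq_drop hps false j (by omega))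
      (periodic_getD_mod_of_forall_iff hper) (by omega)
  obtain ⟨i, -, hi⟩ := huniq (w.take m) (by simp only [List.length_take]; omega)
  have hl_eq : l = i := hi l ⟨by omega, hfactor⟩
  have h0_eq : 0 = i := hi 0 ⟨by omega, rfl⟩
  omega

/-- let `w` be a de Bruijn word of order `m` over `{0,1}`: it has
length `2^m + m - 1`, every binary word of length `m` occurs exactly once as a
factor of `w`, and the prefix and suffix of `w` of length `m - 1` coincide.
Then the language `B_m = {a^k : the (k mod' 2^m)-th letter of w is 1}` (letters
indexed from 1, `x mod' y = x % y` if `x % y > 0` and `y` otherwise) is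
properly `2^m`-cyclic. -/
theorem stmt_19 (m : ℕ) (hm : 0 < m) (w : List Bool)
    (hlen : w.length = 2 ^ m + m - 1)
    (huniq : ∀ u : List Bool, u.length = m →
      ∃! i : ℕ, i + m ≤ w.length ∧ (w.drop i).take m = u)
    (hps : w.take (m - 1) = w.drop (2 ^ m)) :
    (∀ k : ℕ,
      (w.getD ((if k % 2 ^ m = 0 then 2 ^ m else k % 2 ^ m) - 1) false = true) ↔
      (w.getD ((if (k + 2 ^ m) % 2 ^ m = 0 then 2 ^ m
        else (k + 2 ^ m) % 2 ^ m) - 1) false = true)) ∧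
    (∀ l, 1 ≤ l → l < 2 ^ m →
      ¬ (∀ k : ℕ,
        (w.getD ((if k % 2 ^ m = 0 then 2 ^ m else k % 2 ^ m) - 1) false
          = true) ↔
        (w.getD ((if (k + l) % 2 ^ m = 0 then 2 ^ m
          else (k + l) % 2 ^ m) - 1) false = true))) :=
  stmt_19_general m w hlen huniq hps
end
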